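/- Let S be a commutative, cancellative monoid, s ∈ S, and m ∈ 𝒜(S) with s − m ∈ S and L(s) finite. If ℓ(s) ≠ ℓ(s − m) + 1, then for every finitely supported tuple (c_a) ∈ ℕ^{𝒜(S_red)∖{[m]}} such that s is associate to φ_S(c_a) and |(c_a)| = ℓ(s), and for every (c_a') ∈ MinRepl_m(S) with (c_a') ≤ (c_a) coordinatewise, one has ℓ(φ_S(c_a')) ≠ ℓ(−m + φ_S(c_a')) + 1. -/

import Mathlib

/-!
Suppose `ℓ(s') = ℓ(t') + 1`. Replacing the part `c'` of a shortest factorization `c` of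
`s = m + t` by a shortest factorization of `t'` yields a factorization of `t` of length
`ℓ(s) - |c'| + ℓ(t') ≤ ℓ(s) - ℓ(s') + ℓ(t') = ℓ(s) - 1`, while appending `m` to a shortest
factorization of `t` gives `ℓ(s) ≤ ℓ(t) + 1`. Hence `ℓ(s) = ℓ(t) + 1`.
-/

namespace Paper

/-- The additive congruence on `S` identifying associate elements
(`s ∼ t` iff `s + u = t` for some additive unit `u`). -/
def assocCon (S : Type*) [AddCancelCommMonoid S] : AddCon S where
  r s t := ∃ u : AddUnits S, s + (u : S) = t
  iseqv := by
    refine ⟨fun s => ⟨0, by simp⟩, ?_, ?_⟩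
    · rintro s t ⟨u, rfl⟩
      exact ⟨-u, by rw [add_assoc, AddUnits.add_neg, add_zero]⟩
    · rintro s t w ⟨u, rfl⟩ ⟨v, rfl⟩
      exact ⟨u + v, by rw [AddUnits.val_add, add_assoc]⟩
  add' := by
    rintro a b c d ⟨u, rfl⟩ ⟨v, rfl⟩
    refine ⟨u + v, ?_⟩
    rw [AddUnits.val_add]
    abel

/-- The reduced monoid `S_red = S / U(S)`. -/
abbrev Red (S : Type*) [AddCancelCommMonoid S] := (assocCon S).Quotient

variable {S : Type*} [AddCancelCommMonoid S]

/-- The class `[s]` of `s` in `S_red`. -/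
def cls (s : S) : Red S := (assocCon S).mk' s

/-- `a` is an atom: a nonzero nonunit such that in any decomposition
`b + c = a`, one of `b`, `c` is a unit. -/
def IsAddAtom {M : Type*} [AddMonoid M] (a : M) : Prop :=
  a ≠ 0 ∧ ¬ IsAddUnit a ∧ ∀ b c : M, b + c = a → IsAddUnit b ∨ IsAddUnit c

/-- The length `|(c_a)|` of a tuple. -/
def flen (c : Red S →₀ ℕ) : ℕ := c.sum fun _ n => n

/-- The factorization homomorphism `φ_S`. -/
def phi (c : Red S →₀ ℕ) : Red S := c.sum fun x n => n • x

/-- The set of factorizations `Z(s)`: finitely supported tuples indexed by the atoms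
of `S_red` summing to `[s]`. -/
def ZSet (s : S) : Set (Red S →₀ ℕ) :=
  {c | (∀ x ∈ c.support, IsAddAtom x) ∧ phi c = cls s}

/-- The longest factorization length `L(s)`. -/
noncomputable def lenL (s : S) : ℕ := sSup (flen '' ZSet s)

/-- The shortest factorization length `ℓ(s)`. -/
noncomputable def lenl (s : S) : ℕ := sInf (flen '' ZSet s)

/-- `L(s)` is (defined and) finite. -/
def LFinite (s : S) : Prop := (ZSet s).Nonempty ∧ BddAbove (flen '' ZSet s)

/-- `Repl_m(S)`: tuples over the atoms of `S_red` other than `[m]` whose evaluation,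
after subtracting `m`, stays in `S`. -/
def ReplSet (m : S) : Set (Red S →₀ ℕ) :=
  {c | (∀ x ∈ c.support, IsAddAtom x ∧ x ≠ cls m) ∧ ∃ s t : S, cls s = phi c ∧ m + t = s}

/-- `MinRepl_m(S)`: the minimal elements of `Repl_m(S)` under the coordinatewise order. -/
def MinReplSet (m : S) : Set (Red S →₀ ℕ) :=
  {c ∈ ReplSet m | ∀ c' ∈ ReplSet m, c' ≤ c → c' = c}

lemma cls_add (a b : S) : cls (a + b) = cls a + cls b := map_add _ _ _

lemma cls_zero : cls (0 : S) = 0 := map_zero _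

lemma cls_eq_cls_iff {a b : S} : cls a = cls b ↔ ∃ u : AddUnits S, a + u = b := AddCon.eq _

lemma cls_surjective : Function.Surjective (cls (S := S)) := AddCon.mk'_surjective

instance : IsLeftCancelAdd (Red S) where
  add_left_cancel x y z h := by
    obtain ⟨a, rfl⟩ := cls_surjective x
    obtain ⟨b, rfl⟩ := cls_surjective y
    obtain ⟨c, rfl⟩ := cls_surjective z
    beta_reduce at h
    rw [← cls_add, ← cls_add, cls_eq_cls_iff] at h
    obtain ⟨u, hu⟩ := h
    exact cls_eq_cls_iff.mpr ⟨u, add_left_cancel (a := a) (by rw [← add_assoc, hu])⟩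

lemma isAddUnit_iff_cls_eq_zero {a : S} : IsAddUnit a ↔ cls a = 0 := by
  rw [← cls_zero, cls_eq_cls_iff]
  constructor
  · rintro ⟨u, rfl⟩
    exact ⟨-u, u.add_neg⟩
  · rintro ⟨u, hu⟩
    exact .of_add_eq_zero _ hu

lemma isAddUnit_red_iff {x : Red S} : IsAddUnit x ↔ x = 0 := by
  refine ⟨?_, fun hx => hx ▸ isAddUnit_zero⟩
  rintro ⟨u, rfl⟩
  obtain ⟨a, ha⟩ := cls_surjective (u : Red S)
  obtain ⟨b, hb⟩ := cls_surjective ((-u : AddUnits (Red S)) : Red S)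
  have hab : IsAddUnit (a + b) := by
    rw [isAddUnit_iff_cls_eq_zero, cls_add, ha, hb, u.add_neg]
  rw [← ha, ← isAddUnit_iff_cls_eq_zero]
  exact isAddUnit_of_add_isAddUnit_left hab

lemma IsAddAtom.cls {m : S} (hm : IsAddAtom m) : IsAddAtom (cls m) := by
  obtain ⟨-, hunit, hsplit⟩ := hm
  refine ⟨fun h => hunit (isAddUnit_iff_cls_eq_zero.mpr h),
    fun h => hunit (isAddUnit_iff_cls_eq_zero.mpr (isAddUnit_red_iff.mp h)), ?_⟩
  intro x y hxy
  obtain ⟨a, rfl⟩ := cls_surjective x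
  obtain ⟨b, rfl⟩ := cls_surjective y
  rw [← cls_add, cls_eq_cls_iff] at hxy
  obtain ⟨u, hu⟩ := hxy
  simp only [isAddUnit_red_iff, ← isAddUnit_iff_cls_eq_zero]
  refine (hsplit a (b + u) (by rw [← add_assoc, hu])).imp id fun hbu => ?_
  simpa using hbu.add (-u).isAddUnit

lemma phi_add (c d : Red S →₀ ℕ) : phi (c + d) = phi c + phi d :=
  Finsupp.sum_add_index' (fun _ => zero_smul _ _) (fun _ _ _ => add_smul _ _ _)

lemma phi_single_one (x : Red S) : phi (Finsupp.single x 1) = x := by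
  simp [phi]

lemma flen_add (c d : Red S →₀ ℕ) : flen (c + d) = flen c + flen d :=
  map_add Finsupp.degree c d

lemma flen_single_one (x : Red S) : flen (Finsupp.single x 1) = 1 :=
  Finsupp.degree_single x 1

lemma zero_mem_ZSet {t : S} (ht : cls t = 0) : 0 ∈ ZSet t :=
  ⟨by simp, by rw [phi, Finsupp.sum_zero_index, ht]⟩

lemma add_single_mem_ZSet {m t : S} {c : Red S →₀ ℕ} (hm : IsAddAtom m) (hc : c ∈ ZSet t) :
    c + Finsupp.single (cls m) 1 ∈ ZSet (m + t) := by
  classical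
  refine ⟨fun x hx => ?_, by rw [phi_add, hc.2, phi_single_one, cls_add, add_comm]⟩
  rcases Finset.mem_union.mp (Finsupp.support_add hx) with hx | hx
  · exact hc.1 x hx
  · rw [Finset.mem_singleton.mp (Finsupp.support_single_subset hx)]
    exact hm.cls

lemma lenl_le_flen {s : S} {c : Red S →₀ ℕ} (hc : c ∈ ZSet s) : lenl s ≤ flen c :=
  Nat.sInf_le ⟨c, hc, rfl⟩

lemma exists_flen_eq_lenl {s : S} (h : (ZSet s).Nonempty) : ∃ c ∈ ZSet s, flen c = lenl s :=
  Nat.sInf_mem (h.image flen)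

lemma lenl_add_le {m t : S} (hm : IsAddAtom m) (ht : (ZSet t).Nonempty) :
    lenl (m + t) ≤ lenl t + 1 := by
  obtain ⟨c, hc, hlen⟩ := exists_flen_eq_lenl ht
  calc lenl (m + t) ≤ flen (c + Finsupp.single (cls m) 1) :=
        lenl_le_flen (add_single_mem_ZSet hm hc)
    _ = lenl t + 1 := by rw [flen_add, hlen, flen_single_one]

lemma isAddAtom_cls_of_lenl_eq_one {s : S} (hs : (ZSet s).Nonempty) (h : lenl s = 1) :
    IsAddAtom (cls s) := by
  obtain ⟨c, hc, hlen⟩ := exists_flen_eq_lenl hs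
  obtain ⟨x, rfl⟩ := (Finsupp.sum_eq_one_iff c).mp (hlen.trans h)
  rw [← hc.2, phi_single_one]
  exact hc.1 x (by simp)

/-- `lenl t = sInf ∅ = 0` when `t` has no factorization; the hypothesis would then make
`[m + t]` an atom, forcing `t` to be a unit. -/
lemma ZSet_nonempty_of_lenl_add_eq {m t : S} (hm : IsAddAtom m) (hmt : (ZSet (m + t)).Nonempty)
    (h : lenl (m + t) = lenl t + 1) : (ZSet t).Nonempty := by
  by_contra hempty
  have hlen : lenl (m + t) = 1 := by
    rw [h, lenl, Set.not_nonempty_iff_eq_empty.mp hempty, Set.image_empty, Nat.sInf_empty]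
  have hatom := isAddAtom_cls_of_lenl_eq_one hmt hlen
  rw [cls_add] at hatom
  rcases hatom.2.2 _ _ rfl with hunit | hunit
  · exact hm.cls.2.1 hunit
  · exact hempty ⟨0, zero_mem_ZSet (isAddUnit_red_iff.mp hunit)⟩

lemma tsub_add_mem_ZSet {m t t' : S} {c c' z : Red S →₀ ℕ} (hc : c ∈ ZSet (m + t))
    (hc' : c' ∈ ZSet (m + t')) (hle : c' ≤ c) (hz : z ∈ ZSet t') : c - c' + z ∈ ZSet t := by
  classical
  refine ⟨fun x hx => ?_, add_left_cancel (a := cls m) ?_⟩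
  · rcases Finset.mem_union.mp (Finsupp.support_add hx) with hx | hx
    · exact hc.1 x (Finsupp.support_tsub hx)
    · exact hz.1 x hx
  · calc cls m + phi (c - c' + z) = phi (c - c') + cls (m + t') := by
          rw [phi_add, hz.2, cls_add]; abel
      _ = cls (m + t) := by rw [← hc'.2, ← phi_add, tsub_add_cancel_of_le hle, hc.2]
      _ = cls m + cls t := cls_add m t

theorem statement3_general {S : Type*} [AddCancelCommMonoid S] (s m t : S)
    (hm : IsAddAtom m) (ht : m + t = s)
    (hne : lenl s ≠ lenl t + 1) :
    ∀ c : Red S →₀ ℕ, (∀ x ∈ c.support, IsAddAtom x ∧ x ≠ cls m) →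
      cls s = phi c → flen c = lenl s →
      ∀ c' ∈ MinReplSet m, c' ≤ c →
        ∀ s' t' : S, cls s' = phi c' → m + t' = s' → lenl s' ≠ lenl t' + 1 := by
  rintro c hcatoms hcs hclen c' ⟨⟨hc'atoms, -⟩, -⟩ hle s' t' hs' rfl h
  subst ht
  have hc : c ∈ ZSet (m + t) := ⟨fun x hx => (hcatoms x hx).1, hcs.symm⟩
  have hc' : c' ∈ ZSet (m + t') := ⟨fun x hx => (hc'atoms x hx).1, hs'.symm⟩
  obtain ⟨z, hz, hzlen⟩ :=
    exists_flen_eq_lenl (ZSet_nonempty_of_lenl_add_eq hm ⟨c', hc'⟩ h)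
  have hexchange := tsub_add_mem_ZSet hc hc' hle hz
  have hupper := lenl_add_le hm ⟨_, hexchange⟩
  have hlower := lenl_le_flen hexchange
  have hc'len := lenl_le_flen hc'
  have hsplit : flen (c - c') + flen c' = flen c := by
    rw [← flen_add, tsub_add_cancel_of_le hle]
  rw [flen_add, hzlen] at hlower
  omega

theorem statement3 {S : Type*} [AddCancelCommMonoid S] (s m t : S)
    (hm : IsAddAtom m) (ht : m + t = s) (hfin : LFinite s)
    (hne : lenl s ≠ lenl t + 1) :
    ∀ c : Red S →₀ ℕ, (∀ x ∈ c.support, IsAddAtom x ∧ x ≠ cls m) →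
      cls s = phi c → flen c = lenl s →
      ∀ c' ∈ MinReplSet m, c' ≤ c →
        ∀ s' t' : S, cls s' = phi c' → m + t' = s' → lenl s' ≠ lenl t' + 1 :=
  statement3_general s m t hm ht hne

end Paper
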